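/- arXiv:2507.11018 — 4 statements merged into one kernel-verified Lean document; each statement's English description precedes it below -/
import Mathlib

section
/- Structure of the optimal contract: suppose the smallest maximizer s̄* of s ↦ δ·π(s) + w(s) on [0,1] satisfies s̄* > 0. Then every optimal contract (s,p) satisfies: (i) s_t < s_{t+1} for all t ≥ 0 (gradual knowledge transfer); (ii) δ·π(s_1) + w(0) = δ·π(s̄*) + w(s̄*); (iii) s_t < s̄* for every t and s_t → s̄* as t → ∞; (iv) p_0 = 0 and p_t = (w(s_{t−1}) − w(s_t))/(1−δ) for all t ≥ 1. -/
open Set Filter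

/-- Principal's continuation value `Π_t(s,p) = Σ_{τ=t}^∞ δ^{τ−t}(π(s_τ) − p_τ)`. -/
noncomputable def PiVal (δ : ℝ) (π : ℝ → ℝ) (s p : ℕ → ℝ) (t : ℕ) : ℝ :=
  ∑' k : ℕ, δ ^ k * (π (s (t + k)) - p (t + k))

/-- Expert's continuation value `W_t(s,p) = Σ_{τ=t}^∞ δ^{τ−t}(w(s_τ) + p_τ)`. -/
noncomputable def WVal (δ : ℝ) (w : ℝ → ℝ) (s p : ℕ → ℝ) (t : ℕ) : ℝ :=
  ∑' k : ℕ, δ ^ k * (w (s (t + k)) + p (t + k))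

/-- A contract: `s` takes values in `[0,1]`, `s 0 = 0`, and `t ↦ δ^t·p_t` is summable. -/
def IsContract (δ : ℝ) (s p : ℕ → ℝ) : Prop :=
  (∀ t, s t ∈ Set.Icc (0 : ℝ) 1) ∧ s 0 = 0 ∧ Summable fun t => δ ^ t * p t

/-- Implementability: feasibility (monotone `s`, nonnegative `p`) plus (P-IC) and (E-IC). -/
def Implementable (δ : ℝ) (π w : ℝ → ℝ) (s p : ℕ → ℝ) : Prop :=
  IsContract δ s p ∧ Monotone s ∧ (∀ t, 0 ≤ p t) ∧
  (∀ t, π (s t) / (1 - δ) ≤ PiVal δ π s p t) ∧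
  (∀ t, w (s t) / (1 - δ) ≤ WVal δ w s p (t + 1))

/-- An optimal contract maximizes the principal's time-0 profit among implementable contracts. -/
def Optimal (δ : ℝ) (π w : ℝ → ℝ) (s p : ℕ → ℝ) : Prop :=
  Implementable δ π w s p ∧
  ∀ s' p' : ℕ → ℝ, Implementable δ π w s' p' → PiVal δ π s' p' 0 ≤ PiVal δ π s p 0

/-- The set of maximizers of `x ↦ δ·π(x) + w(x)` on `[0,1]`. -/
def MaxSet (δ : ℝ) (π w : ℝ → ℝ) : Set ℝ :=
  {x | x ∈ Set.Icc (0 : ℝ) 1 ∧ ∀ y ∈ Set.Icc (0 : ℝ) 1, δ * π y + w y ≤ δ * π x + w x}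

/-!
Let `G` be the maximum of `δ·π + w` on `[0,1]`, `S_t = Π_t + W_t` the total surplus and
`E_t = S_t − π(s_t) − G/(1−δ)`. Then `E_t = (δ·π(s_{t+1}) + w(s_t) − G) + δ·E_{t+1}`, while (P-IC)
at `t+1` and (E-IC) at `t` together say `E_{t+1} − E_t = (1−δ)·(sum of the two slacks) ≥ 0`. Being
bounded and nondecreasing, `E` has a limit `ℓ` with `(1−δ)·ℓ = δ·π(L) + w(L) − G ≤ 0`, `L = lim s`;
so `E ≤ 0`, and `Π_0 = π(0) + (G − w(0))/(1−δ) + E_0 − p_0 − δ·(E-IC slack at 0)` is at most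
`π(0) + (G − w(0))/(1−δ)`. The intermediate value theorem gives a path with
`δ·π(σ_{t+1}) + w(σ_t) = G`, and paying along it so that (E-IC) binds attains this bound. An optimal
contract therefore has `E ≡ 0` and `p_0 = 0`: it follows such a binding path with binding (E-IC).
From `0 < s̄` such a path increases strictly, stays below the least maximizer `s̄`, and converges
to a maximizer, hence to `s̄`.
-/

open Topology

noncomputable def discountedSum (δ : ℝ) (f : ℕ → ℝ) (t : ℕ) : ℝ :=
  ∑' k : ℕ, δ ^ k * f (t + k)

section DiscountedSum

variable {δ C : ℝ} {f g : ℕ → ℝ}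

lemma summable_geometric_mul_of_abs_le (hδ0 : 0 ≤ δ) (hδ1 : δ < 1) (hf : ∀ n, |f n| ≤ C) :
    Summable fun n => δ ^ n * f n :=
  ((summable_geometric_of_lt_one hδ0 hδ1).mul_left C).of_norm_bounded fun n => by
    rw [Real.norm_eq_abs, abs_mul, abs_pow, abs_of_nonneg hδ0, mul_comm]
    exact mul_le_mul_of_nonneg_right (hf n) (pow_nonneg hδ0 n)

lemma summable_geometric_mul_shift (hδ : δ ≠ 0) (hf : Summable fun n => δ ^ n * f n) (t : ℕ) :
    Summable fun k => δ ^ k * f (t + k) := by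
  refine (summable_mul_left_iff (pow_ne_zero t hδ)).mp ?_
  simpa only [Function.comp_def, pow_add, mul_assoc] using hf.comp_injective (add_right_injective t)

lemma discountedSum_eq_add (hδ : δ ≠ 0) (hf : Summable fun n => δ ^ n * f n) (t : ℕ) :
    discountedSum δ f t = f t + δ * discountedSum δ f (t + 1) := by
  rw [discountedSum, (summable_geometric_mul_shift hδ hf t).tsum_eq_zero_add, discountedSum,
    ← tsum_mul_left]
  simp only [pow_zero, one_mul, add_zero, pow_succ, add_right_comm t 1, add_assoc]
  congr 1
  exact tsum_congr fun k => by ring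

lemma abs_discountedSum_le (hδ0 : 0 ≤ δ) (hδ1 : δ < 1) (hf : ∀ n, |f n| ≤ C) (t : ℕ) :
    |discountedSum δ f t| ≤ C / (1 - δ) := by
  rw [div_eq_mul_inv, ← Real.norm_eq_abs]
  refine tsum_of_norm_bounded ((hasSum_geometric_of_lt_one hδ0 hδ1).mul_left C) fun k => ?_
  rw [Real.norm_eq_abs, abs_mul, abs_pow, abs_of_nonneg hδ0, mul_comm]
  exact mul_le_mul_of_nonneg_right (hf _) (pow_nonneg hδ0 k)

lemma eq_zero_of_eq_mul_succ (hδ0 : 0 ≤ δ) (hδ1 : δ < 1) {x : ℕ → ℝ}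
    (hx : ∀ t, x t = δ * x (t + 1)) (hC : ∀ t, |x t| ≤ C) (t : ℕ) : x t = 0 := by
  have hpow : ∀ n, x t = δ ^ n * x (t + n) := by
    intro n
    induction n with
    | zero => simp
    | succ n ih => rw [ih, hx (t + n), pow_succ, mul_assoc, add_assoc]
  have hlim : Tendsto (fun n => δ ^ n * C) atTop (𝓝 0) := by
    simpa using (tendsto_pow_atTop_nhds_zero_of_lt_one hδ0 hδ1).mul_const C
  refine abs_nonpos_iff.mp (ge_of_tendsto' hlim fun n => ?_)
  rw [hpow n, abs_mul, abs_pow, abs_of_nonneg hδ0]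
  exact mul_le_mul_of_nonneg_left (hC _) (pow_nonneg hδ0 n)

end DiscountedSum

/-- `E_t = S_t − π(s_t) − G/(1−δ)`, where `S_t = Π_t + W_t` is the total surplus from date `t` on;
for bounded `π ∘ s`, `w ∘ s` it vanishes identically iff `δ·π(s_{t+1}) + w(s_t) = G` for all `t`. -/
noncomputable def surplusGap (δ G : ℝ) (π w : ℝ → ℝ) (s : ℕ → ℝ) (t : ℕ) : ℝ :=
  discountedSum δ (fun n => π (s n) + w (s n)) t - π (s t) - G / (1 - δ)

noncomputable def principalSlack (δ : ℝ) (π : ℝ → ℝ) (s p : ℕ → ℝ) (t : ℕ) : ℝ :=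
  PiVal δ π s p t - π (s t) / (1 - δ)

noncomputable def expertSlack (δ : ℝ) (w : ℝ → ℝ) (s p : ℕ → ℝ) (t : ℕ) : ℝ :=
  WVal δ w s p (t + 1) - w (s t) / (1 - δ)

noncomputable def bindingPayment (δ : ℝ) (w : ℝ → ℝ) (s : ℕ → ℝ) : ℕ → ℝ
  | 0 => 0
  | n + 1 => (w (s n) - w (s (n + 1))) / (1 - δ)

section ContractValues

variable {δ G C : ℝ} {π w : ℝ → ℝ} {s p : ℕ → ℝ}

lemma WVal_eq_add (hδ : δ ∈ Ioo (0 : ℝ) 1) (hw : ∀ n, |w (s n)| ≤ C)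
    (hp : Summable fun n => δ ^ n * p n) (t : ℕ) :
    WVal δ w s p t = w (s t) + p t + δ * WVal δ w s p (t + 1) :=
  discountedSum_eq_add (f := fun n => w (s n) + p n) hδ.1.ne'
    (by simpa only [mul_add] using (summable_geometric_mul_of_abs_le hδ.1.le hδ.2 hw).add hp) t

lemma PiVal_add_WVal (hδ : δ ∈ Ioo (0 : ℝ) 1) (hπ : ∀ n, |π (s n)| ≤ C)
    (hw : ∀ n, |w (s n)| ≤ C) (hp : Summable fun n => δ ^ n * p n) (t : ℕ) :
    PiVal δ π s p t + WVal δ w s p t = discountedSum δ (fun n => π (s n) + w (s n)) t := by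
  have hπs := summable_geometric_mul_of_abs_le hδ.1.le hδ.2 hπ
  have hws := summable_geometric_mul_of_abs_le hδ.1.le hδ.2 hw
  rw [PiVal, WVal, ← (summable_geometric_mul_shift hδ.1.ne' (f := fun n => π (s n) - p n)
    (by simpa only [mul_sub] using hπs.sub hp) t).tsum_add
    (summable_geometric_mul_shift hδ.1.ne' (f := fun n => w (s n) + p n)
    (by simpa only [mul_add] using hws.add hp) t)]
  exact tsum_congr fun k => by ring

lemma surplusGap_eq_add (hδ : δ ∈ Ioo (0 : ℝ) 1) (hπ : ∀ n, |π (s n)| ≤ C)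
    (hw : ∀ n, |w (s n)| ≤ C) (t : ℕ) :
    surplusGap δ G π w s t =
      (δ * π (s (t + 1)) + w (s t) - G) + δ * surplusGap δ G π w s (t + 1) := by
  have h1δ : 1 - δ ≠ 0 := (sub_pos.2 hδ.2).ne'
  have hπs := summable_geometric_mul_of_abs_le hδ.1.le hδ.2 hπ
  have hws := summable_geometric_mul_of_abs_le hδ.1.le hδ.2 hw
  have hS := discountedSum_eq_add hδ.1.ne' (f := fun n => π (s n) + w (s n))
    (by simpa only [mul_add] using hπs.add hws) t
  simp only [surplusGap, hS]
  field_simp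
  ring

lemma expertSlack_eq_add (hδ : δ ∈ Ioo (0 : ℝ) 1) (hw : ∀ n, |w (s n)| ≤ C)
    (hp : Summable fun n => δ ^ n * p n) (t : ℕ) :
    expertSlack δ w s p t =
      (p (t + 1) - bindingPayment δ w s (t + 1)) + δ * expertSlack δ w s p (t + 1) := by
  have h1δ : 1 - δ ≠ 0 := (sub_pos.2 hδ.2).ne'
  simp only [expertSlack, bindingPayment, WVal_eq_add hδ hw hp (t + 1)]
  field_simp
  ring

lemma surplusGap_succ_eq_slacks (hδ : δ ∈ Ioo (0 : ℝ) 1) (hπ : ∀ n, |π (s n)| ≤ C)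
    (hw : ∀ n, |w (s n)| ≤ C) (hp : Summable fun n => δ ^ n * p n) (t : ℕ) :
    (1 - δ) * surplusGap δ G π w s (t + 1) =
      (1 - δ) * (principalSlack δ π s p (t + 1) + expertSlack δ w s p t) +
        (δ * π (s (t + 1)) + w (s t) - G) := by
  have h1δ : 1 - δ ≠ 0 := (sub_pos.2 hδ.2).ne'
  simp only [surplusGap, principalSlack, expertSlack, ← PiVal_add_WVal hδ hπ hw hp (t + 1)]
  field_simp
  ring

lemma PiVal_eq_surplusGap_sub (hδ : δ ∈ Ioo (0 : ℝ) 1) (hπ : ∀ n, |π (s n)| ≤ C)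
    (hw : ∀ n, |w (s n)| ≤ C) (hp : Summable fun n => δ ^ n * p n) (t : ℕ) :
    PiVal δ π s p t = π (s t) + (G - w (s t)) / (1 - δ) + surplusGap δ G π w s t - p t -
      δ * expertSlack δ w s p t := by
  have h1δ : 1 - δ ≠ 0 := (sub_pos.2 hδ.2).ne'
  have hW := WVal_eq_add hδ hw hp t
  simp only [surplusGap, expertSlack, ← PiVal_add_WVal hδ hπ hw hp t]
  field_simp
  linear_combination (δ - 1) * hW

lemma surplusGap_bounded (hδ : δ ∈ Ioo (0 : ℝ) 1) (hπ : ∀ n, |π (s n)| ≤ C)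
    (hw : ∀ n, |w (s n)| ≤ C) : ∃ B, ∀ t, |surplusGap δ G π w s t| ≤ B := by
  refine ⟨(C + C) / (1 - δ) + C + |G / (1 - δ)|, fun t => ?_⟩
  have hS := abs_discountedSum_le hδ.1.le hδ.2
    (fun n => (abs_add_le _ _).trans (add_le_add (hπ n) (hw n))) t
  exact (abs_sub _ _).trans (add_le_add ((abs_sub _ _).trans (add_le_add hS (hπ t))) le_rfl)

lemma expertSlack_bounded (hδ : δ ∈ Ioo (0 : ℝ) 1) (hw : ∀ n, |w (s n)| ≤ C)
    {D : ℝ} (hp : ∀ n, |p n| ≤ D) : ∃ B, ∀ t, |expertSlack δ w s p t| ≤ B := by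
  refine ⟨(C + D) / (1 - δ) + C / (1 - δ), fun t => ?_⟩
  have hW := abs_discountedSum_le hδ.1.le hδ.2
    (fun n => (abs_add_le _ _).trans (add_le_add (hw n) (hp n))) (t + 1)
  have hwt : |w (s t) / (1 - δ)| ≤ C / (1 - δ) := by
    rw [abs_div, abs_of_pos (sub_pos.2 hδ.2)]
    exact div_le_div_of_nonneg_right (hw t) (sub_pos.2 hδ.2).le
  exact (abs_sub _ _).trans (add_le_add hW hwt)

end ContractValues

section Limits

variable {δ : ℝ} {π w : ℝ → ℝ} {s : ℕ → ℝ}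

lemma exists_abs_comp_le (hπc : ContinuousOn π (Icc 0 1)) (hwc : ContinuousOn w (Icc 0 1))
    (hs : ∀ n, s n ∈ Icc (0 : ℝ) 1) : ∃ C, (∀ n, |π (s n)| ≤ C) ∧ ∀ n, |w (s n)| ≤ C := by
  obtain ⟨Cπ, hCπ⟩ := isCompact_Icc.exists_bound_of_continuousOn hπc
  obtain ⟨Cw, hCw⟩ := isCompact_Icc.exists_bound_of_continuousOn hwc
  exact ⟨max Cπ Cw, fun n => (hCπ _ (hs n)).trans (le_max_left _ _),
    fun n => (hCw _ (hs n)).trans (le_max_right _ _)⟩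

lemma exists_tendsto_nhdsWithin_Icc (hs : ∀ n, s n ∈ Icc (0 : ℝ) 1) (hmono : Monotone s) :
    ∃ L ∈ Icc (0 : ℝ) 1, Tendsto s atTop (𝓝[Icc 0 1] L) := by
  have hbdd : BddAbove (range s) := ⟨1, by rintro _ ⟨n, rfl⟩; exact (hs n).2⟩
  have hL := tendsto_atTop_ciSup hmono hbdd
  exact ⟨_, isClosed_Icc.mem_of_tendsto hL (Eventually.of_forall hs),
    tendsto_nhdsWithin_of_tendsto_nhds_of_eventually_within s hL (Eventually.of_forall hs)⟩

lemma tendsto_binding_term (hπc : ContinuousOn π (Icc 0 1)) (hwc : ContinuousOn w (Icc 0 1))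
    {L : ℝ} (hL : L ∈ Icc (0 : ℝ) 1) (hsL : Tendsto s atTop (𝓝[Icc 0 1] L)) :
    Tendsto (fun t => δ * π (s (t + 1)) + w (s t)) atTop (𝓝 (δ * π L + w L)) :=
  (((hπc L hL).tendsto.comp (hsL.comp (tendsto_add_atTop_nat 1))).const_mul δ).add
    ((hwc L hL).tendsto.comp hsL)

end Limits

section Implementable

variable {δ G C : ℝ} {π w : ℝ → ℝ} {s p : ℕ → ℝ}

lemma Implementable.monotone_surplusGap (h : Implementable δ π w s p) (hδ : δ ∈ Ioo (0 : ℝ) 1)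
    (hπ : ∀ n, |π (s n)| ≤ C) (hw : ∀ n, |w (s n)| ≤ C) : Monotone (surplusGap δ G π w s) := by
  obtain ⟨⟨-, -, hp⟩, -, -, hPIC, hEIC⟩ := h
  refine monotone_nat_of_le_succ fun t => ?_
  have hslack : 0 ≤ (1 - δ) * (principalSlack δ π s p (t + 1) + expertSlack δ w s p t) :=
    mul_nonneg (sub_pos.2 hδ.2).le (add_nonneg (sub_nonneg.2 (hPIC _)) (sub_nonneg.2 (hEIC t)))
  have h1 := surplusGap_eq_add (G := G) hδ hπ hw t
  have h2 := surplusGap_succ_eq_slacks (G := G) hδ hπ hw hp t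
  linarith

lemma Implementable.surplusGap_nonpos (h : Implementable δ π w s p) (hδ : δ ∈ Ioo (0 : ℝ) 1)
    (hπc : ContinuousOn π (Icc 0 1)) (hwc : ContinuousOn w (Icc 0 1))
    (hmax : ∀ x ∈ Icc (0 : ℝ) 1, δ * π x + w x ≤ G) (t : ℕ) : surplusGap δ G π w s t ≤ 0 := by
  obtain ⟨C, hπ, hw⟩ := exists_abs_comp_le hπc hwc h.1.1
  have hmono := h.monotone_surplusGap (G := G) hδ hπ hw
  obtain ⟨B, hB⟩ := surplusGap_bounded (G := G) hδ hπ hw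
  have hE := tendsto_atTop_ciSup hmono
    ⟨B, by rintro _ ⟨n, rfl⟩; exact (le_abs_self _).trans (hB n)⟩
  set ℓ := ⨆ n, surplusGap δ G π w s n
  obtain ⟨L, hL, hsL⟩ := exists_tendsto_nhdsWithin_Icc h.1.1 h.2.1
  -- `δ·π(s_{t+1}) + w(s_t) − G = E_t − δ·E_{t+1}` tends both to `(1−δ)ℓ` and to `G(L) − G ≤ 0`
  have h1 : Tendsto (fun t => δ * π (s (t + 1)) + w (s t) - G) atTop (𝓝 (ℓ - δ * ℓ)) := by
    refine (hE.sub ((hE.comp (tendsto_add_atTop_nat 1)).const_mul δ)).congr fun t => ?_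
    simp only [Function.comp_apply, surplusGap_eq_add (G := G) hδ hπ hw t]
    ring
  have h2 := (tendsto_binding_term (δ := δ) hπc hwc hL hsL).sub_const G
  have hℓ : ℓ - δ * ℓ ≤ 0 := (tendsto_nhds_unique h1 h2).symm ▸ sub_nonpos.2 (hmax L hL)
  have hℓ0 : ℓ ≤ 0 := by nlinarith [hδ.2]
  exact (hmono.ge_of_tendsto hE t).trans hℓ0

lemma Implementable.binding_of_le_PiVal (h : Implementable δ π w s p)
    (hδ : δ ∈ Ioo (0 : ℝ) 1) (hπc : ContinuousOn π (Icc 0 1)) (hwc : ContinuousOn w (Icc 0 1))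
    (hmax : ∀ x ∈ Icc (0 : ℝ) 1, δ * π x + w x ≤ G)
    (hV : π (s 0) + (G - w (s 0)) / (1 - δ) ≤ PiVal δ π s p 0) :
    p = bindingPayment δ w s ∧ ∀ t, δ * π (s (t + 1)) + w (s t) = G := by
  obtain ⟨C, hπ, hw⟩ := exists_abs_comp_le hπc hwc h.1.1
  have hps := h.1.2.2
  have hp0 := h.2.2.1 0
  have hP : ∀ t, 0 ≤ principalSlack δ π s p t := fun t => sub_nonneg.2 (h.2.2.2.1 t)
  have he : ∀ t, 0 ≤ expertSlack δ w s p t := fun t => sub_nonneg.2 (h.2.2.2.2 t)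
  have hPi := PiVal_eq_surplusGap_sub (G := G) hδ hπ hw hps 0
  have hE0 : 0 ≤ surplusGap δ G π w s 0 := by
    linarith [mul_nonneg hδ.1.le (he 0)]
  have hE : ∀ t, surplusGap δ G π w s t = 0 := fun t =>
    le_antisymm (h.surplusGap_nonpos hδ hπc hwc hmax t)
      (hE0.trans (h.monotone_surplusGap hδ hπ hw (Nat.zero_le t)))
  have hbind : ∀ t, δ * π (s (t + 1)) + w (s t) = G := fun t => by
    have := surplusGap_eq_add (G := G) hδ hπ hw t
    rw [hE, hE] at this
    linarith
  have he0 : ∀ t, expertSlack δ w s p t = 0 := fun t => by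
    have := surplusGap_succ_eq_slacks (G := G) hδ hπ hw hps t
    rw [hE, hbind t, sub_self, add_zero, mul_zero, eq_comm] at this
    have := (mul_eq_zero.1 this).resolve_left (sub_pos.2 hδ.2).ne'
    linarith [hP (t + 1), he t]
  refine ⟨funext fun t => ?_, hbind⟩
  cases t with
  | zero =>
    rw [hE, he0] at hPi
    linarith [show bindingPayment δ w s 0 = 0 from rfl]
  | succ t =>
    have := expertSlack_eq_add hδ hw hps t
    rw [he0, he0] at this
    linarith

end Implementable

section BindingPath

variable {δ sbar : ℝ} {π w : ℝ → ℝ}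

lemma lt_and_lt_of_binding (hδ : 0 < δ) (hπm : MonotoneOn π (Icc 0 1))
    (hwa : StrictAntiOn w (Icc 0 1)) (hsbar : IsLeast (MaxSet δ π w) sbar) {x y : ℝ}
    (hx : x ∈ Icc (0 : ℝ) 1) (hy : y ∈ Icc (0 : ℝ) 1) (hxs : x < sbar)
    (hxy : δ * π y + w x = δ * π sbar + w sbar) : x < y ∧ y < sbar := by
  have hs := hsbar.1.1
  have hGx : δ * π x + w x < δ * π sbar + w sbar :=
    (hsbar.1.2 x hx).lt_of_ne fun h => hxs.not_ge (hsbar.2 ⟨hx, fun z hz => h ▸ hsbar.1.2 z hz⟩)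
  have hw : w sbar < w x := hwa hx hs hxs
  exact ⟨hπm.reflect_lt hx hy (lt_of_mul_lt_mul_left (by linarith) hδ.le),
    hπm.reflect_lt hy hs (lt_of_mul_lt_mul_left (by linarith) hδ.le)⟩

lemma exists_binding_step (hπc : ContinuousOn π (Icc 0 1)) (hwa : AntitoneOn w (Icc 0 1))
    (hsbar : sbar ∈ MaxSet δ π w) {x : ℝ} (hx : x ∈ Icc (0 : ℝ) 1) (hxs : x ≤ sbar) :
    ∃ y ∈ Icc x sbar, δ * π y + w x = δ * π sbar + w sbar := by
  have hsub : Icc x sbar ⊆ Icc 0 1 := Icc_subset_Icc hx.1 hsbar.1.2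
  have hcont : ContinuousOn (fun y => δ * π y + w x) (Icc x sbar) :=
    (continuousOn_const.mul (hπc.mono hsub)).add continuousOn_const
  exact intermediate_value_Icc hxs hcont
    ⟨hsbar.2 x hx, by simpa using hwa hx hsbar.1 hxs⟩

lemma binding_path_lt (hδ : 0 < δ) (hπm : MonotoneOn π (Icc 0 1))
    (hwa : StrictAntiOn w (Icc 0 1)) (hsbar : IsLeast (MaxSet δ π w) sbar) {s : ℕ → ℝ}
    (hs : ∀ n, s n ∈ Icc (0 : ℝ) 1) (h0 : s 0 < sbar)
    (hbind : ∀ n, δ * π (s (n + 1)) + w (s n) = δ * π sbar + w sbar) (n : ℕ) :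
    s n < s (n + 1) ∧ s (n + 1) < sbar := by
  induction n with
  | zero => exact lt_and_lt_of_binding hδ hπm hwa hsbar (hs 0) (hs 1) h0 (hbind 0)
  | succ n ih => exact lt_and_lt_of_binding hδ hπm hwa hsbar (hs _) (hs _) ih.2 (hbind _)

lemma exists_binding_path (hδ : 0 < δ) (hπc : ContinuousOn π (Icc 0 1))
    (hπm : MonotoneOn π (Icc 0 1)) (hwa : StrictAntiOn w (Icc 0 1))
    (hsbar : IsLeast (MaxSet δ π w) sbar) (hpos : 0 < sbar) :
    ∃ σ : ℕ → ℝ, (∀ n, σ n ∈ Icc (0 : ℝ) 1) ∧ σ 0 = 0 ∧ Monotone σ ∧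
      ∀ n, δ * π (σ (n + 1)) + w (σ n) = δ * π sbar + w sbar := by
  have hstep : ∀ x : Ico 0 sbar, ∃ y : Ico 0 sbar,
      (x : ℝ) ≤ y ∧ δ * π y + w x = δ * π sbar + w sbar := by
    rintro ⟨x, hx0, hxs⟩
    have hx : x ∈ Icc (0 : ℝ) 1 := ⟨hx0, hxs.le.trans hsbar.1.1.2⟩
    obtain ⟨y, hy, hxy⟩ := exists_binding_step hπc hwa.antitoneOn hsbar.1 hx hxs.le
    have hy' : y ∈ Icc (0 : ℝ) 1 := ⟨hx0.trans hy.1, hy.2.trans hsbar.1.1.2⟩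
    exact ⟨⟨y, hy'.1, (lt_and_lt_of_binding hδ hπm hwa hsbar hx hy' hxs hxy).2⟩, hy.1, hxy⟩
  choose next hle hnext using hstep
  let σ : ℕ → Ico 0 sbar := fun n => next^[n] ⟨0, le_rfl, hpos⟩
  have hσ : ∀ n, σ (n + 1) = next (σ n) := fun n => Function.iterate_succ_apply' next n _
  refine ⟨fun n => σ n, fun n => ⟨(σ n).2.1, (σ n).2.2.le.trans hsbar.1.1.2⟩, rfl,
    monotone_nat_of_le_succ fun n => ?_, fun n => ?_⟩
  · rw [hσ]; exact hle _
  · show δ * π (σ (n + 1)) + w (σ n) = _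
    rw [hσ]; exact hnext _

lemma tendsto_of_binding (hπc : ContinuousOn π (Icc 0 1)) (hwc : ContinuousOn w (Icc 0 1))
    (hsbar : IsLeast (MaxSet δ π w) sbar) {s : ℕ → ℝ} (hs : ∀ n, s n ∈ Icc (0 : ℝ) 1)
    (hmono : Monotone s) (hlt : ∀ n, s n < sbar)
    (hbind : ∀ n, δ * π (s (n + 1)) + w (s n) = δ * π sbar + w sbar) :
    Tendsto s atTop (𝓝 sbar) := by
  obtain ⟨L, hL, hsL⟩ := exists_tendsto_nhdsWithin_Icc hs hmono
  have hGL : δ * π L + w L = δ * π sbar + w sbar :=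
    tendsto_nhds_unique (tendsto_binding_term hπc hwc hL hsL)
      (by simp only [hbind]; exact tendsto_const_nhds)
  have hsL' := hsL.mono_right nhdsWithin_le_nhds
  have hLs : L = sbar := le_antisymm (le_of_tendsto' hsL' fun n => (hlt n).le)
    (hsbar.2 ⟨hL, fun y hy => hGL ▸ hsbar.1.2 y hy⟩)
  exact hLs ▸ hsL'

end BindingPath

section BindingPayment

variable {δ G C : ℝ} {π w : ℝ → ℝ} {s : ℕ → ℝ}

lemma bindingPayment_nonneg (hδ1 : δ < 1) (hwa : AntitoneOn w (Icc 0 1))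
    (hs : ∀ n, s n ∈ Icc (0 : ℝ) 1) (hmono : Monotone s) (n : ℕ) :
    0 ≤ bindingPayment δ w s n := by
  cases n with
  | zero => exact le_rfl
  | succ n =>
    exact div_nonneg (sub_nonneg.2 (hwa (hs n) (hs (n + 1)) (hmono n.le_succ)))
      (sub_pos.2 hδ1).le

lemma abs_bindingPayment_le (hδ1 : δ < 1) (hw : ∀ n, |w (s n)| ≤ C) (n : ℕ) :
    |bindingPayment δ w s n| ≤ (C + C) / (1 - δ) := by
  have hC : 0 ≤ C + C := add_nonneg ((abs_nonneg _).trans (hw 0)) ((abs_nonneg _).trans (hw 0))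
  cases n with
  | zero => simpa [bindingPayment] using div_nonneg hC (sub_pos.2 hδ1).le
  | succ n =>
    rw [bindingPayment, abs_div, abs_of_pos (sub_pos.2 hδ1)]
    exact div_le_div_of_nonneg_right ((abs_sub _ _).trans (add_le_add (hw n) (hw (n + 1))))
      (sub_pos.2 hδ1).le

lemma implementable_bindingPayment (hδ : δ ∈ Ioo (0 : ℝ) 1) (hπc : ContinuousOn π (Icc 0 1))
    (hwc : ContinuousOn w (Icc 0 1)) (hwa : AntitoneOn w (Icc 0 1))
    (hmax : ∀ x ∈ Icc (0 : ℝ) 1, δ * π x + w x ≤ G) (hs : ∀ n, s n ∈ Icc (0 : ℝ) 1)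
    (hs0 : s 0 = 0) (hmono : Monotone s) (hbind : ∀ t, δ * π (s (t + 1)) + w (s t) = G) :
    Implementable δ π w s (bindingPayment δ w s) ∧
      PiVal δ π s (bindingPayment δ w s) 0 = π (s 0) + (G - w (s 0)) / (1 - δ) := by
  obtain ⟨C, hπ, hw⟩ := exists_abs_comp_le hπc hwc hs
  set q := bindingPayment δ w s
  have hq := summable_geometric_mul_of_abs_le hδ.1.le hδ.2 (abs_bindingPayment_le hδ.2 hw)
  have hE : ∀ t, surplusGap δ G π w s t = 0 := by
    obtain ⟨B, hB⟩ := surplusGap_bounded (G := G) hδ hπ hw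
    refine eq_zero_of_eq_mul_succ hδ.1.le hδ.2 (fun t => ?_) hB
    rw [surplusGap_eq_add hδ hπ hw t, hbind, sub_self, zero_add]
  have he : ∀ t, expertSlack δ w s q t = 0 := by
    obtain ⟨B, hB⟩ := expertSlack_bounded hδ hw (abs_bindingPayment_le hδ.2 hw)
    refine eq_zero_of_eq_mul_succ hδ.1.le hδ.2 (fun t => ?_) hB
    rw [expertSlack_eq_add hδ hw hq t, sub_self, zero_add]
  have hval : PiVal δ π s q 0 = π (s 0) + (G - w (s 0)) / (1 - δ) := by
    rw [PiVal_eq_surplusGap_sub (G := G) hδ hπ hw hq 0, hE, he]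
    simp [bindingPayment]
  refine ⟨⟨⟨hs, hs0, hq⟩, hmono, bindingPayment_nonneg hδ.2 hwa hs hmono, fun t => ?_,
    fun t => sub_nonneg.1 (he t).ge⟩, hval⟩
  refine sub_nonneg.1 (show 0 ≤ principalSlack δ π s q t from ?_)
  cases t with
  | zero =>
    have h1δ : 0 < 1 - δ := sub_pos.2 hδ.2
    have hslack : π (s 0) + (G - w (s 0)) / (1 - δ) - π (s 0) / (1 - δ) =
        (G - (δ * π (s 0) + w (s 0))) / (1 - δ) := by
      field_simp
      ring
    rw [principalSlack, hval, hslack]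
    exact div_nonneg (sub_nonneg.2 (hmax _ (hs 0))) h1δ.le
  | succ t =>
    have := surplusGap_succ_eq_slacks (G := G) hδ hπ hw hq t
    rw [hE, hbind, he, sub_self, add_zero, add_zero, mul_zero, eq_comm] at this
    exact ((mul_eq_zero.1 this).resolve_left (sub_pos.2 hδ.2).ne').ge

end BindingPayment

theorem optimal_contract_structure_general
    (δ : ℝ) (hδ : δ ∈ Set.Ioo (0 : ℝ) 1) (π w : ℝ → ℝ)
    (hπc : ContinuousOn π (Set.Icc 0 1)) (hwc : ContinuousOn w (Set.Icc 0 1))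
    (hπm : StrictMonoOn π (Set.Icc 0 1)) (hwa : StrictAntiOn w (Set.Icc 0 1))
    (sbar : ℝ) (hsbar : IsLeast (MaxSet δ π w) sbar) (hpos : 0 < sbar)
    (s p : ℕ → ℝ) (hopt : Optimal δ π w s p) :
    (∀ t : ℕ, s t < s (t + 1)) ∧
    (δ * π (s 1) + w 0 = δ * π sbar + w sbar) ∧
    (∀ t : ℕ, s t < sbar) ∧ Tendsto s atTop (nhds sbar) ∧
    p 0 = 0 ∧ (∀ t : ℕ, 1 ≤ t → p t = (w (s (t - 1)) - w (s t)) / (1 - δ)) := by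
  obtain ⟨himpl, hbest⟩ := hopt
  have hs := himpl.1.1
  have hs0 := himpl.1.2.1
  obtain ⟨σ, hσ, hσ0, hσmono, hσbind⟩ :=
    exists_binding_path hδ.1 hπc hπm.monotoneOn hwa hsbar hpos
  obtain ⟨hσimpl, hσval⟩ := implementable_bindingPayment hδ hπc hwc hwa.antitoneOn hsbar.1.2
    hσ hσ0 hσmono hσbind
  obtain ⟨hpay, hbind⟩ := himpl.binding_of_le_PiVal hδ hπc hwc hsbar.1.2
    (by simpa only [hs0, ← hσ0, hσval] using hbest σ _ hσimpl)
  have hpath := binding_path_lt hδ.1 hπm.monotoneOn hwa hsbar hs (hs0 ▸ hpos) hbind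
  have hlt (t : ℕ) : s t < sbar := by
    cases t with
    | zero => exact hs0 ▸ hpos
    | succ t => exact (hpath t).2
  refine ⟨fun t => (hpath t).1,
    hs0 ▸ hbind 0, hlt, tendsto_of_binding hπc hwc hsbar hs himpl.2.1 hlt hbind,
    congrFun hpay 0, fun t ht => ?_⟩
  obtain ⟨t, rfl⟩ := Nat.exists_eq_add_of_le' ht
  rw [hpay]
  rfl

/-- Structure of the optimal contract when the smallest maximizer sbar is positive. -/
theorem optimal_contract_structure
    (δ : ℝ) (hδ : δ ∈ Set.Ioo (0 : ℝ) 1) (π w : ℝ → ℝ)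
    (hπc : ContinuousOn π (Set.Icc 0 1)) (hwc : ContinuousOn w (Set.Icc 0 1))
    (hπm : StrictMonoOn π (Set.Icc 0 1)) (hwa : StrictAntiOn w (Set.Icc 0 1))
    (hGm : StrictMonoOn (fun x => π x + w x) (Set.Icc 0 1))
    (sbar : ℝ) (hsbar : IsLeast (MaxSet δ π w) sbar) (hpos : 0 < sbar)
    (s p : ℕ → ℝ) (hopt : Optimal δ π w s p) :
    (∀ t : ℕ, s t < s (t + 1)) ∧
    (δ * π (s 1) + w 0 = δ * π sbar + w sbar) ∧
    (∀ t : ℕ, s t < sbar) ∧ Tendsto s atTop (nhds sbar) ∧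
    p 0 = 0 ∧ (∀ t : ℕ, 1 ≤ t → p t = (w (s (t - 1)) - w (s t)) / (1 - δ)) :=
  optimal_contract_structure_general δ hδ π w hπc hwc hπm hwa sbar hsbar hpos s p hopt
end

section
/- Monotonicity of the optimal knowledge sequence in patience: if 0 < δ₂ < δ₁ < 1, (s,p) is an optimal contract at discount factor δ₂, and (s′,p′) is an optimal contract at discount factor δ₁, then s_t ≤ s′_t for every t. -/
/-!
Payments only transfer surplus, so eliminating them reduces the problem to the knowledge path:
`s` is implementable iff it satisfies the relaxed constraints
`π(s_{t+1}) + w(s_t) ≤ (1 - δ) Σ_k δ^k (π + w)(s_{t+1+k})`, and then the principal extracts the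
whole surplus `Σ_k δ^k (π + w)(s_k)` minus the expert's outside value `w(0)/(1 - δ)`. The right-hand
side is an Abel mean of the nondecreasing sequence `(π + w)(s_{t+1+k})`, which increases with `δ`,
so a path that is relaxed-feasible at `δ₂` stays so at `δ₁`; and relaxed feasibility is preserved
by pointwise maxima. If `s_t > s'_t` for some `t`, the path `s ⊔ s'` is therefore feasible at `δ₁`
with strictly larger surplus, contradicting the optimality of `s'`.
-/

open Set Filter

section Discounting

variable {δ : ℝ}

lemma abs_le_max_of_monotoneOn_Icc {f : ℝ → ℝ} {a b x : ℝ} (hf : MonotoneOn f (Icc a b))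
    (hx : x ∈ Icc a b) : |f x| ≤ max |f a| |f b| :=
  have hab : a ≤ b := hx.1.trans hx.2
  abs_le_max_abs_abs (hf (left_mem_Icc.2 hab) hx hx.1) (hf hx (right_mem_Icc.2 hab) hx.2)

lemma summable_pow_mul_of_abs_le {a : ℕ → ℝ} {M : ℝ} (h0 : 0 ≤ δ) (h1 : δ < 1)
    (ha : ∀ k, |a k| ≤ M) : Summable fun k => δ ^ k * a k :=
  ((summable_geometric_of_lt_one h0 h1).mul_right M).of_norm_bounded fun k => by
    rw [Real.norm_eq_abs, abs_mul, abs_pow, abs_of_nonneg h0]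
    exact mul_le_mul_of_nonneg_left (ha k) (pow_nonneg h0 k)

lemma summable_pow_mul_comp_of_monotoneOn {f : ℝ → ℝ} {u : ℕ → ℝ}
    (hf : MonotoneOn f (Icc 0 1)) (h0 : 0 ≤ δ) (h1 : δ < 1) (hu : ∀ k, u k ∈ Icc 0 1) :
    Summable fun k => δ ^ k * f (u k) :=
  summable_pow_mul_of_abs_le h0 h1 fun k => abs_le_max_of_monotoneOn_Icc hf (hu k)

lemma summable_pow_mul_comp_of_antitoneOn {f : ℝ → ℝ} {u : ℕ → ℝ}
    (hf : AntitoneOn f (Icc 0 1)) (h0 : 0 ≤ δ) (h1 : δ < 1) (hu : ∀ k, u k ∈ Icc 0 1) :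
    Summable fun k => δ ^ k * f (u k) := by
  simpa using (summable_pow_mul_comp_of_monotoneOn hf.neg h0 h1 hu).neg

lemma summable_pow_mul_nat_add (h0 : 0 < δ) {p : ℕ → ℝ}
    (hp : Summable fun k => δ ^ k * p k) (t : ℕ) : Summable fun k => δ ^ k * p (t + k) :=
  (((summable_nat_add_iff t).2 hp).mul_left (δ ^ t)⁻¹).congr fun k => by
    rw [add_comm k t, pow_add]
    field_simp

lemma tsum_pow_mul_nat_add_eq {g : ℕ → ℝ} (t : ℕ) (h : Summable fun k => δ ^ k * g (t + k)) :
    ∑' k, δ ^ k * g (t + k) = g t + δ * ∑' k, δ ^ k * g (t + 1 + k) := by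
  rw [h.tsum_eq_zero_add, ← tsum_mul_left]
  congr 1
  · simp
  · exact tsum_congr fun k => by rw [pow_succ, ← add_assoc, Nat.add_right_comm t k 1]; ring

lemma one_sub_mul_tsum_pow_mul {a : ℕ → ℝ} {M : ℝ} (ha : ∀ k, |a k| ≤ M) (h0 : 0 ≤ δ)
    (h1 : δ < 1) :
    (1 - δ) * ∑' k, δ ^ k * a k = a 0 + δ * ∑' k, δ ^ k * (a (k + 1) - a k) := by
  have hsum : Summable fun k => δ ^ k * a k := summable_pow_mul_of_abs_le h0 h1 ha
  have hsucc : Summable fun k => δ ^ k * a (k + 1) := summable_pow_mul_of_abs_le h0 h1 (ha <| · + 1)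
  have hshift := tsum_pow_mul_nat_add_eq (g := a) 0 (by simpa using hsum)
  simp only [zero_add, add_comm 1] at hshift
  have hdiff : ∑' k, δ ^ k * (a (k + 1) - a k) = ∑' k, δ ^ k * a (k + 1) - ∑' k, δ ^ k * a k := by
    rw [← hsucc.tsum_sub hsum]
    simp only [mul_sub]
  rw [hdiff]
  linear_combination hshift

lemma Monotone.le_one_sub_mul_tsum_pow_mul {a : ℕ → ℝ} {M : ℝ} (ha : Monotone a)
    (hM : ∀ k, |a k| ≤ M) (h0 : 0 ≤ δ) (h1 : δ < 1) :
    a 0 ≤ (1 - δ) * ∑' k, δ ^ k * a k := by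
  rw [one_sub_mul_tsum_pow_mul hM h0 h1, le_add_iff_nonneg_right]
  exact mul_nonneg h0 <| tsum_nonneg fun k =>
    mul_nonneg (pow_nonneg h0 k) (sub_nonneg.2 (ha k.le_succ))

lemma Monotone.monotoneOn_one_sub_mul_tsum_pow_mul {a : ℕ → ℝ} {M : ℝ} (ha : Monotone a)
    (hM : ∀ k, |a k| ≤ M) : MonotoneOn (fun δ => (1 - δ) * ∑' k, δ ^ k * a k) (Ico 0 1) := by
  intro δ₂ hδ₂ δ₁ hδ₁ h21
  have hinc : ∀ k, 0 ≤ a (k + 1) - a k := fun k => sub_nonneg.2 (ha k.le_succ)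
  have hincM : ∀ k, |a (k + 1) - a k| ≤ M + M := fun k =>
    (abs_sub _ _).trans (add_le_add (hM _) (hM _))
  have hsum_le : ∑' k, δ₂ ^ k * (a (k + 1) - a k) ≤ ∑' k, δ₁ ^ k * (a (k + 1) - a k) :=
    Summable.tsum_le_tsum
      (fun k => mul_le_mul_of_nonneg_right (pow_le_pow_left₀ hδ₂.1 h21 k) (hinc k))
      (summable_pow_mul_of_abs_le hδ₂.1 hδ₂.2 hincM) (summable_pow_mul_of_abs_le hδ₁.1 hδ₁.2 hincM)
  have hsum_nonneg : 0 ≤ ∑' k, δ₂ ^ k * (a (k + 1) - a k) :=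
    tsum_nonneg fun k => mul_nonneg (pow_nonneg hδ₂.1 k) (hinc k)
  simp only [one_sub_mul_tsum_pow_mul hM hδ₂.1 hδ₂.2, one_sub_mul_tsum_pow_mul hM hδ₁.1 hδ₁.2,
    add_le_add_iff_left]
  exact mul_le_mul h21 hsum_le hsum_nonneg hδ₁.1

end Discounting

noncomputable def surplus (δ : ℝ) (π w : ℝ → ℝ) (s : ℕ → ℝ) (t : ℕ) : ℝ :=
  ∑' k : ℕ, δ ^ k * (π (s (t + k)) + w (s (t + k)))

/-- The constraints left on the knowledge path once payments are eliminated: (E-IC) at `t` plus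
(P-IC) at `t + 1`. -/
structure IsRelaxedFeasible (δ : ℝ) (π w : ℝ → ℝ) (s : ℕ → ℝ) : Prop where
  mem_Icc : ∀ t, s t ∈ Icc (0 : ℝ) 1
  zero : s 0 = 0
  monotone : Monotone s
  add_le_surplus : ∀ t, π (s (t + 1)) + w (s t) ≤ (1 - δ) * surplus δ π w s (t + 1)

section Contracts

variable {π w : ℝ → ℝ} {δ : ℝ}

lemma summable_pow_mul_add_comp (hπ : MonotoneOn π (Icc 0 1)) (hw : AntitoneOn w (Icc 0 1))
    (h0 : 0 ≤ δ) (h1 : δ < 1) {u : ℕ → ℝ} (hu : ∀ k, u k ∈ Icc 0 1) :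
    Summable fun k => δ ^ k * (π (u k) + w (u k)) := by
  simpa only [mul_add] using (summable_pow_mul_comp_of_monotoneOn hπ h0 h1 hu).add
    (summable_pow_mul_comp_of_antitoneOn hw h0 h1 hu)

lemma piVal_add_wVal (hπ : MonotoneOn π (Icc 0 1)) (hw : AntitoneOn w (Icc 0 1)) (h0 : 0 < δ)
    (h1 : δ < 1) {s p : ℕ → ℝ} (hs : ∀ t, s t ∈ Icc 0 1) (hp : Summable fun t => δ ^ t * p t)
    (t : ℕ) : PiVal δ π s p t + WVal δ w s p t = surplus δ π w s t := by
  have hps := summable_pow_mul_nat_add h0 hp t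
  have hPi : Summable fun k => δ ^ k * (π (s (t + k)) - p (t + k)) := by
    simpa only [mul_sub] using
      (summable_pow_mul_comp_of_monotoneOn hπ h0.le h1 fun k => hs (t + k)).sub hps
  have hW : Summable fun k => δ ^ k * (w (s (t + k)) + p (t + k)) := by
    simpa only [mul_add] using
      (summable_pow_mul_comp_of_antitoneOn hw h0.le h1 fun k => hs (t + k)).add hps
  rw [PiVal, WVal, surplus, ← hPi.tsum_add hW]
  exact tsum_congr fun k => by ring

lemma wVal_eq_add (hw : AntitoneOn w (Icc 0 1)) (h0 : 0 < δ) (h1 : δ < 1) {s p : ℕ → ℝ}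
    (hs : ∀ t, s t ∈ Icc 0 1) (hp : Summable fun t => δ ^ t * p t) (t : ℕ) :
    WVal δ w s p t = w (s t) + p t + δ * WVal δ w s p (t + 1) :=
  tsum_pow_mul_nat_add_eq (g := fun n => w (s n) + p n) t <| by
    simpa only [mul_add] using (summable_pow_mul_comp_of_antitoneOn hw h0.le h1
      fun k => hs (t + k)).add (summable_pow_mul_nat_add h0 hp t)

lemma Implementable.isRelaxedFeasible (hπ : MonotoneOn π (Icc 0 1))
    (hw : AntitoneOn w (Icc 0 1)) (h0 : 0 < δ) (h1 : δ < 1) {s p : ℕ → ℝ}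
    (h : Implementable δ π w s p) : IsRelaxedFeasible δ π w s := by
  obtain ⟨⟨hs, hs0, hp⟩, hmono, -, hPIC, hEIC⟩ := h
  refine ⟨hs, hs0, hmono, fun t => ?_⟩
  rw [← div_le_iff₀' (sub_pos.2 h1), add_div, ← piVal_add_wVal hπ hw h0 h1 hs hp]
  exact add_le_add (hPIC (t + 1)) (hEIC t)

lemma Implementable.piVal_zero_le (hπ : MonotoneOn π (Icc 0 1)) (hw : AntitoneOn w (Icc 0 1))
    (h0 : 0 < δ) (h1 : δ < 1) {s p : ℕ → ℝ} (h : Implementable δ π w s p) :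
    PiVal δ π s p 0 ≤ surplus δ π w s 0 - w 0 / (1 - δ) := by
  obtain ⟨⟨hs, hs0, hp⟩, -, hpnn, -, hEIC⟩ := h
  have hW0 : w 0 / (1 - δ) ≤ WVal δ w s p 0 := by
    have hW1 := hEIC 0
    rw [hs0] at hW1
    have hgeom : w 0 / (1 - δ) = w 0 + δ * (w 0 / (1 - δ)) := by
      field_simp [(sub_pos.2 h1).ne']
      ring
    rw [wVal_eq_add hw h0 h1 hs hp 0, hs0, hgeom]
    linarith [hpnn 0, mul_le_mul_of_nonneg_left hW1 h0.le]
  linarith [piVal_add_wVal hπ hw h0 h1 hs hp 0]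

end Contracts

/-- Pays the expert, at each date, the drop of his outside option, capitalised at `1 - δ`; this
keeps (E-IC) binding. Because `0 - 1 = 0` in `ℕ`, nothing is paid at date `0`. -/
noncomputable def indifferencePayment (δ : ℝ) (w : ℝ → ℝ) (s : ℕ → ℝ) (t : ℕ) : ℝ :=
  (w (s (t - 1)) - w (s t)) / (1 - δ)

section Payment

variable {π w : ℝ → ℝ} {δ : ℝ} {s : ℕ → ℝ}

lemma wVal_indifferencePayment (hw : AntitoneOn w (Icc 0 1)) (h0 : 0 ≤ δ) (h1 : δ < 1)
    (hs : ∀ t, s t ∈ Icc 0 1) (t : ℕ) :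
    WVal δ w s (indifferencePayment δ w s) t = w (s (t - 1)) / (1 - δ) := by
  have hb : Summable fun k => δ ^ k * w (s (t + k - 1)) :=
    summable_pow_mul_comp_of_antitoneOn hw h0 h1 fun k => hs _
  have hterm : ∀ k, δ ^ k * (w (s (t + k)) + indifferencePayment δ w s (t + k)) =
      (δ ^ k * w (s (t + k - 1)) - δ ^ (k + 1) * w (s (t + (k + 1) - 1))) / (1 - δ) := by
    intro k
    rw [indifferencePayment, ← add_assoc, Nat.add_sub_cancel, pow_succ]
    field_simp [(sub_pos.2 h1).ne']
    ring
  rw [WVal, tsum_congr hterm, tsum_div_const, hb.tsum_sub ((summable_nat_add_iff 1).2 hb),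
    hb.tsum_eq_zero_add]
  simp

lemma summable_indifferencePayment (hw : AntitoneOn w (Icc 0 1)) (h0 : 0 ≤ δ) (h1 : δ < 1)
    (hs : ∀ t, s t ∈ Icc 0 1) : Summable fun t => δ ^ t * indifferencePayment δ w s t := by
  simpa only [indifferencePayment, mul_div_assoc', mul_sub] using
    ((summable_pow_mul_comp_of_antitoneOn hw h0 h1 fun t => hs (t - 1)).sub
      (summable_pow_mul_comp_of_antitoneOn hw h0 h1 hs)).div_const (1 - δ)

lemma piVal_indifferencePayment (hπ : MonotoneOn π (Icc 0 1)) (hw : AntitoneOn w (Icc 0 1))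
    (h0 : 0 < δ) (h1 : δ < 1) (hs : ∀ t, s t ∈ Icc 0 1) (t : ℕ) :
    PiVal δ π s (indifferencePayment δ w s) t = surplus δ π w s t - w (s (t - 1)) / (1 - δ) := by
  rw [← piVal_add_wVal hπ hw h0 h1 hs (summable_indifferencePayment hw h0.le h1 hs) t,
    wVal_indifferencePayment hw h0.le h1 hs, add_sub_cancel_right]

lemma add_le_one_sub_mul_surplus (hG : MonotoneOn (fun x => π x + w x) (Icc 0 1)) (h0 : 0 ≤ δ)
    (h1 : δ < 1) (hs : ∀ t, s t ∈ Icc 0 1) (hmono : Monotone s) (t : ℕ) :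
    π (s t) + w (s t) ≤ (1 - δ) * surplus δ π w s t := by
  simpa [surplus] using Monotone.le_one_sub_mul_tsum_pow_mul
    (a := fun k => π (s (t + k)) + w (s (t + k)))
    (fun k l hkl => hG (hs _) (hs _) (hmono (Nat.add_le_add_left hkl t)))
    (fun k => abs_le_max_of_monotoneOn_Icc hG (hs (t + k))) h0 h1

lemma IsRelaxedFeasible.exists_implementable (hπ : MonotoneOn π (Icc 0 1))
    (hw : AntitoneOn w (Icc 0 1)) (hG : MonotoneOn (fun x => π x + w x) (Icc 0 1)) (h0 : 0 < δ)
    (h1 : δ < 1) (hR : IsRelaxedFeasible δ π w s) :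
    ∃ p, Implementable δ π w s p ∧ PiVal δ π s p 0 = surplus δ π w s 0 - w 0 / (1 - δ) := by
  have hpos : 0 < 1 - δ := sub_pos.2 h1
  refine ⟨indifferencePayment δ w s, ⟨⟨hR.mem_Icc, hR.zero,
    summable_indifferencePayment hw h0.le h1 hR.mem_Icc⟩, hR.monotone, fun t => ?_, fun t => ?_,
    fun t => ?_⟩, ?_⟩
  · exact div_nonneg (sub_nonneg.2 <| hw (hR.mem_Icc _) (hR.mem_Icc _) <|
      hR.monotone (Nat.sub_le t 1)) hpos.le
  · rw [piVal_indifferencePayment hπ hw h0 h1 hR.mem_Icc, le_sub_iff_add_le, ← add_div,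
      div_le_iff₀' hpos]
    cases t with
    | zero => exact add_le_one_sub_mul_surplus hG h0.le h1 hR.mem_Icc hR.monotone 0
    | succ t => exact hR.add_le_surplus t
  · rw [wVal_indifferencePayment hw h0.le h1 hR.mem_Icc, Nat.add_sub_cancel]
  · rw [piVal_indifferencePayment hπ hw h0 h1 hR.mem_Icc, Nat.zero_sub, hR.zero]

end Payment

section Patience

variable {π w : ℝ → ℝ} {δ : ℝ}

lemma IsRelaxedFeasible.mono_discount (hG : MonotoneOn (fun x => π x + w x) (Icc 0 1))
    {δ₁ δ₂ : ℝ} (h0 : 0 ≤ δ₂) (h21 : δ₂ ≤ δ₁) (h1 : δ₁ < 1) {s : ℕ → ℝ}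
    (hR : IsRelaxedFeasible δ₂ π w s) : IsRelaxedFeasible δ₁ π w s where
  mem_Icc := hR.mem_Icc
  zero := hR.zero
  monotone := hR.monotone
  add_le_surplus t := (hR.add_le_surplus t).trans <|
    Monotone.monotoneOn_one_sub_mul_tsum_pow_mul
      (a := fun k => π (s (t + 1 + k)) + w (s (t + 1 + k)))
      (fun k l hkl => hG (hR.mem_Icc _) (hR.mem_Icc _) (hR.monotone (by omega)))
      (fun k => abs_le_max_of_monotoneOn_Icc hG (hR.mem_Icc _))
      ⟨h0, h21.trans_lt h1⟩ ⟨h0.trans h21, h1⟩ h21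

lemma surplus_mono (hπ : MonotoneOn π (Icc 0 1)) (hw : AntitoneOn w (Icc 0 1))
    (hG : MonotoneOn (fun x => π x + w x) (Icc 0 1)) (h0 : 0 ≤ δ) (h1 : δ < 1) {u v : ℕ → ℝ}
    (hu : ∀ t, u t ∈ Icc 0 1) (hv : ∀ t, v t ∈ Icc 0 1) (huv : u ≤ v) (t : ℕ) :
    surplus δ π w u t ≤ surplus δ π w v t :=
  Summable.tsum_le_tsum
    (fun k => mul_le_mul_of_nonneg_left (hG (hu _) (hv _) (huv _)) (pow_nonneg h0 k))
    (summable_pow_mul_add_comp hπ hw h0 h1 fun k => hu (t + k))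
    (summable_pow_mul_add_comp hπ hw h0 h1 fun k => hv (t + k))

lemma surplus_lt_surplus (hπ : MonotoneOn π (Icc 0 1)) (hw : AntitoneOn w (Icc 0 1))
    (hG : StrictMonoOn (fun x => π x + w x) (Icc 0 1)) (h0 : 0 < δ) (h1 : δ < 1) {u v : ℕ → ℝ}
    (hu : ∀ t, u t ∈ Icc 0 1) (hv : ∀ t, v t ∈ Icc 0 1) (huv : u ≤ v) {t k : ℕ}
    (hlt : u (t + k) < v (t + k)) : surplus δ π w u t < surplus δ π w v t :=
  Summable.tsum_lt_tsum (i := k)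
    (fun j => mul_le_mul_of_nonneg_left (hG.monotoneOn (hu _) (hv _) (huv _))
      (pow_nonneg h0.le j))
    (mul_lt_mul_of_pos_left (hG (hu _) (hv _) hlt) (pow_pos h0 k))
    (summable_pow_mul_add_comp hπ hw h0.le h1 fun j => hu (t + j))
    (summable_pow_mul_add_comp hπ hw h0.le h1 fun j => hv (t + j))

/-- At each date the larger path inherits the relaxed constraint from whichever path attains the
maximum at the next date. -/
lemma IsRelaxedFeasible.sup (hπ : MonotoneOn π (Icc 0 1)) (hw : AntitoneOn w (Icc 0 1))
    (hG : MonotoneOn (fun x => π x + w x) (Icc 0 1)) (h0 : 0 ≤ δ) (h1 : δ < 1) {s s' : ℕ → ℝ}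
    (hR : IsRelaxedFeasible δ π w s) (hR' : IsRelaxedFeasible δ π w s') :
    IsRelaxedFeasible δ π w (s ⊔ s') := by
  have hmem : ∀ t, (s ⊔ s') t ∈ Icc (0 : ℝ) 1 := fun t =>
    ⟨(hR.mem_Icc t).1.trans le_sup_left, sup_le (hR.mem_Icc t).2 (hR'.mem_Icc t).2⟩
  refine ⟨hmem, by simp [hR.zero, hR'.zero], hR.monotone.sup hR'.monotone, fun t => ?_⟩
  have inherit : ∀ u, IsRelaxedFeasible δ π w u → u ≤ s ⊔ s' → u (t + 1) = (s ⊔ s') (t + 1) →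
      π ((s ⊔ s') (t + 1)) + w ((s ⊔ s') t) ≤ (1 - δ) * surplus δ π w (s ⊔ s') (t + 1) := by
    intro u hRu hle heq
    calc π ((s ⊔ s') (t + 1)) + w ((s ⊔ s') t) ≤ π (u (t + 1)) + w (u t) := by
          rw [heq]
          exact add_le_add le_rfl (hw (hRu.mem_Icc t) (hmem t) (hle t))
      _ ≤ (1 - δ) * surplus δ π w u (t + 1) := hRu.add_le_surplus t
      _ ≤ (1 - δ) * surplus δ π w (s ⊔ s') (t + 1) :=
          mul_le_mul_of_nonneg_left (surplus_mono hπ hw hG h0 h1 hRu.mem_Icc hmem hle _)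
            (sub_nonneg.2 h1.le)
  rcases le_total (s (t + 1)) (s' (t + 1)) with h | h
  · exact inherit s' hR' le_sup_right (by simp [h])
  · exact inherit s hR le_sup_left (by simp [h])

end Patience

theorem optimal_sequence_monotone_in_patience_general
    (π w : ℝ → ℝ)
    (hπm : StrictMonoOn π (Set.Icc 0 1)) (hwa : StrictAntiOn w (Set.Icc 0 1))
    (hGm : StrictMonoOn (fun x => π x + w x) (Set.Icc 0 1))
    (δ₁ δ₂ : ℝ) (hδ₂ : 0 < δ₂) (h₂₁ : δ₂ < δ₁) (hδ₁ : δ₁ < 1)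
    (s p s' p' : ℕ → ℝ)
    (hopt₂ : Optimal δ₂ π w s p) (hopt₁ : Optimal δ₁ π w s' p') :
    ∀ t, s t ≤ s' t := by
  have hπ := hπm.monotoneOn
  have hw := hwa.antitoneOn
  have hG := hGm.monotoneOn
  have hδ₁0 : 0 < δ₁ := hδ₂.trans h₂₁
  by_contra! ⟨t₀, ht₀⟩
  have hRs := hopt₂.1.isRelaxedFeasible hπ hw hδ₂ (h₂₁.trans hδ₁)
  have hRs' := hopt₁.1.isRelaxedFeasible hπ hw hδ₁0 hδ₁
  have hR : IsRelaxedFeasible δ₁ π w (s ⊔ s') :=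
    (hRs.mono_discount hG hδ₂.le h₂₁.le hδ₁).sup hπ hw hG hδ₁0.le hδ₁ hRs'
  obtain ⟨q, hq, hq_val⟩ := hR.exists_implementable hπ hw hG hδ₁0 hδ₁
  have hs'_val := hopt₁.1.piVal_zero_le hπ hw hδ₁0 hδ₁
  have hsurplus : surplus δ₁ π w s' 0 < surplus δ₁ π w (s ⊔ s') 0 :=
    surplus_lt_surplus hπ hw hGm hδ₁0 hδ₁ hRs'.mem_Icc hR.mem_Icc le_sup_right (k := t₀)
      (by rw [zero_add]; exact ht₀.trans_le le_sup_left)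
  linarith [hopt₁.2 _ q hq]

/-- The optimal knowledge sequence increases uniformly in the discount factor. -/
theorem optimal_sequence_monotone_in_patience
    (π w : ℝ → ℝ)
    (hπc : ContinuousOn π (Set.Icc 0 1)) (hwc : ContinuousOn w (Set.Icc 0 1))
    (hπm : StrictMonoOn π (Set.Icc 0 1)) (hwa : StrictAntiOn w (Set.Icc 0 1))
    (hGm : StrictMonoOn (fun x => π x + w x) (Set.Icc 0 1))
    (δ₁ δ₂ : ℝ) (hδ₂ : 0 < δ₂) (h₂₁ : δ₂ < δ₁) (hδ₁ : δ₁ < 1)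
    (s p s' p' : ℕ → ℝ)
    (hopt₂ : Optimal δ₂ π w s p) (hopt₁ : Optimal δ₁ π w s' p') :
    ∀ t, s t ≤ s' t :=
  optimal_sequence_monotone_in_patience_general π w hπm hwa hGm δ₁ δ₂ hδ₂ h₂₁ hδ₁ s p s' p' hopt₂
    hopt₁
end

section
/- Monotone comparison of break-even sequences: if s and s′ are both nondecreasing sequences with values in [0,1], s_0 = s′_0 = 0, both satisfy (BE), and s_1 < s′_1, then s_t < s′_t for every t ≥ 1. -/
open Set Filter

/-- The break-even condition (BE): `δ·(π(s_{t+1}) − π(s_t)) = w(s_{t−1}) − w(s_t)` for every `t ≥ 1`. -/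
def BE (δ : ℝ) (π w : ℝ → ℝ) (s : ℕ → ℝ) : Prop :=
  ∀ t : ℕ, 1 ≤ t → δ * (π (s (t + 1)) - π (s t)) = w (s (t - 1)) - w (s t)

/-- Monotone comparison of break-even sequences. -/
theorem break_even_monotone_comparison
    (δ : ℝ) (hδ : δ ∈ Set.Ioo (0 : ℝ) 1) (π w : ℝ → ℝ)
    (hπc : ContinuousOn π (Set.Icc 0 1)) (hwc : ContinuousOn w (Set.Icc 0 1))
    (hπm : StrictMonoOn π (Set.Icc 0 1)) (hwa : StrictAntiOn w (Set.Icc 0 1))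
    (hGm : StrictMonoOn (fun x => π x + w x) (Set.Icc 0 1))
    (s s' : ℕ → ℝ)
    (hs : ∀ t, s t ∈ Set.Icc (0 : ℝ) 1) (hs' : ∀ t, s' t ∈ Set.Icc (0 : ℝ) 1)
    (hm : Monotone s) (hm' : Monotone s')
    (h0 : s 0 = 0) (h0' : s' 0 = 0)
    (hBE : BE δ π w s) (hBE' : BE δ π w s')
    (h1 : s 1 < s' 1) :
    ∀ t : ℕ, 1 ≤ t → s t < s' t := by
  -- telescoped invariant: δ(π(s_{t+1}) − π(s_1)) = w(s_0) − w(s_t)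
  have inv : ∀ (u : ℕ → ℝ), BE δ π w u →
      ∀ t : ℕ, 1 ≤ t → δ * (π (u (t + 1)) - π (u 1)) = w (u 0) - w (u t) := by
    intro u hu t ht
    induction t, ht using Nat.le_induction with
    | base =>
      have := hu 1 le_rfl
      simpa using this
    | succ n hn ih =>
      have hb := hu (n + 1) (by omega)
      have : (n + 1) - 1 = n := by omega
      rw [this] at hb
      have : δ * (π (u (n + 1 + 1)) - π (u 1))
          = δ * (π (u (n + 1 + 1)) - π (u (n + 1))) + δ * (π (u (n + 1)) - π (u 1)) := by ring
      rw [this, hb, ih]; ring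
  intro t ht
  induction t, ht using Nat.le_induction with
  | base => exact h1
  | succ n hn ih =>
    have H := inv s hBE n hn
    have H' := inv s' hBE' n hn
    rw [h0] at H
    rw [h0'] at H'
    have hw : w (s' n) < w (s n) := hwa (hs n) (hs' n) ih
    have hπ1 : π (s 1) < π (s' 1) := hπm (hs 1) (hs' 1) h1
    have hΔ : 0 < δ * (π (s' 1) - π (s 1)) := mul_pos hδ.1 (by linarith)
    have hlt : δ * π (s (n + 1)) < δ * π (s' (n + 1)) := by nlinarith
    have : π (s (n + 1)) < π (s' (n + 1)) := lt_of_mul_lt_mul_left (by linarith) (le_of_lt hδ.1)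
    exact (hπm.lt_iff_lt (hs (n + 1)) (hs' (n + 1))).mp this
end

section
/- Full transfer upon retirement: if (s,p) is an optimal contract with retirement, then s_K = 1. -/
open Set Filter

/-- Principal's continuation value in the retirement model:
`Π^R_t(s,p) = Σ_{τ=t}^{K−1} δ^{τ−t}(π(s_τ) − p_τ) − δ^{K−1−t}·C(s_K)`. -/
noncomputable def PiR (δ : ℝ) (π C : ℝ → ℝ) (K : ℕ) (s p : ℕ → ℝ) (t : ℕ) : ℝ :=
  (∑ τ ∈ Finset.Ico t K, δ ^ (τ - t) * (π (s τ) - p τ)) - δ ^ (K - 1 - t) * C (s K)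

/-- Expert's continuation value in the retirement model:
`W^R_t(s,p) = Σ_{τ=t}^{K−1} δ^{τ−t}(w(s_τ) + p_τ)`. -/
noncomputable def WR (δ : ℝ) (w : ℝ → ℝ) (K : ℕ) (s p : ℕ → ℝ) (t : ℕ) : ℝ :=
  ∑ τ ∈ Finset.Ico t K, δ ^ (τ - t) * (w (s τ) + p τ)

/-- Implementability in the retirement model: feasibility plus (R-P-IC) and (R-E-IC). -/
def ImplementableR (δ : ℝ) (π w C : ℝ → ℝ) (K : ℕ) (s p : ℕ → ℝ) : Prop :=
  (∀ t ≤ K, s t ∈ Set.Icc (0 : ℝ) 1) ∧ s 0 = 0 ∧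
  (∀ t < K, s t ≤ s (t + 1)) ∧ (∀ t < K, 0 ≤ p t) ∧
  (∀ t < K,
    (1 - δ ^ (K - t)) * π (s t) / (1 - δ) - δ ^ (K - 1 - t) * C (s t)
      ≤ PiR δ π C K s p t) ∧
  (∀ t : ℕ, t + 1 < K →
    (1 - δ ^ (K - t - 1)) * w (s t) / (1 - δ) ≤ WR δ w K s p (t + 1))

/-- Optimality in the retirement model. -/
def OptimalR (δ : ℝ) (π w C : ℝ → ℝ) (K : ℕ) (s p : ℕ → ℝ) : Prop :=
  ImplementableR δ π w C K s p ∧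
  ∀ s' p' : ℕ → ℝ, ImplementableR δ π w C K s' p' →
    PiR δ π C K s' p' 0 ≤ PiR δ π C K s p 0

/-- Full transfer upon retirement: any optimal contract with retirement has s_K = 1. -/
theorem retirement_full_transfer
    (δ : ℝ) (hδ : δ ∈ Set.Ioo (0 : ℝ) 1) (K : ℕ) (hK : 2 ≤ K) (π w C : ℝ → ℝ)
    (hπc : ContinuousOn π (Set.Icc 0 1)) (hwc : ContinuousOn w (Set.Icc 0 1))
    (hπm : StrictMonoOn π (Set.Icc 0 1)) (hwa : StrictAntiOn w (Set.Icc 0 1))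
    (hGm : StrictMonoOn (fun x => π x + w x) (Set.Icc 0 1))
    (hCc : ContinuousOn C (Set.Icc 0 1)) (hCa : StrictAntiOn C (Set.Icc 0 1))
    (hC1 : C 1 = 0)
    (s p : ℕ → ℝ) (hopt : OptimalR δ π w C K s p) :
    s K = 1 := by
  obtain ⟨himpl, hbest⟩ := hopt
  obtain ⟨hfeas, h0, hmono, hp, hPIC, hEIC⟩ := himpl
  have hsK := hfeas K le_rfl
  by_contra hne
  have hsKlt : s K < 1 := lt_of_le_of_ne hsK.2 hne
  have hCpos : 0 < C (s K) := by
    have := hCa hsK (by constructor <;> norm_num) hsKlt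
    rwa [hC1] at this
  set s' : ℕ → ℝ := Function.update s K 1 with hs'
  have hs'eq : ∀ τ, τ ≠ K → s' τ = s τ := fun τ hτ => Function.update_of_ne hτ _ _
  have hs'K : s' K = 1 := Function.update_self _ _ _
  have hKpos : 0 < K := by omega
  have hsumPi : ∀ t, (∑ τ ∈ Finset.Ico t K, δ ^ (τ - t) * (π (s' τ) - p τ))
      = ∑ τ ∈ Finset.Ico t K, δ ^ (τ - t) * (π (s τ) - p τ) := by
    intro t
    refine Finset.sum_congr rfl fun τ hτ => ?_
    rw [hs'eq τ (by have := (Finset.mem_Ico.mp hτ).2; omega)]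
  have hsumW : ∀ t, WR δ w K s' p t = WR δ w K s p t := by
    intro t
    refine Finset.sum_congr rfl fun τ hτ => ?_
    rw [hs'eq τ (by have := (Finset.mem_Ico.mp hτ).2; omega)]
  have hPidiff : ∀ t, PiR δ π C K s' p t
      = PiR δ π C K s p t + δ ^ (K - 1 - t) * C (s K) := by
    intro t
    simp only [PiR, hsumPi, hs'K, hC1]
    ring
  have hδpos : 0 < δ := hδ.1
  have himpl' : ImplementableR δ π w C K s' p := by
    refine ⟨?_, ?_, ?_, hp, ?_, ?_⟩
    · intro t ht
      rcases eq_or_ne t K with rfl | h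
      · rw [hs'K]; constructor <;> norm_num
      · rw [hs'eq t h]; exact hfeas t ht
    · rw [hs'eq 0 (by omega)]; exact h0
    · intro t ht
      rcases eq_or_ne (t + 1) K with h1 | h1
      · rw [hs'eq t (by omega), h1, hs'K]
        exact (hfeas t (by omega)).2
      · rw [hs'eq t (by omega), hs'eq (t + 1) h1]
        exact hmono t ht
    · intro t ht
      rw [hs'eq t (by omega), hPidiff t]
      have : 0 ≤ δ ^ (K - 1 - t) * C (s K) :=
        mul_nonneg (pow_nonneg hδpos.le _) hCpos.le
      linarith [hPIC t ht]
    · intro t ht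
      rw [hs'eq t (by omega), hsumW (t + 1)]
      exact hEIC t ht
  have hle := hbest s' p himpl'
  rw [hPidiff 0] at hle
  have : 0 < δ ^ (K - 1 - 0) * C (s K) :=
    mul_pos (pow_pos hδpos _) hCpos
  linarith
end
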